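/- arXiv:1510.05334 — 2 statements merged into one kernel-verified Lean document; each statement's English description precedes it below -/
import Mathlib

section
/- For every function f: F^n → F over a finite prime field F with bias(f) = δ, there exists a set A ⊆ F^n with |A| ≥ (δ²/2)·|F|^n such that for every y ∈ A, the derivative D_y f(x) = f(x+y) - f(x) satisfies bias(D_y f) ≥ δ²/2. -/
open Finset

/-- The bias of a function `f : F^n → F`, `F = Z/q`:
`bias(f) = |E_{x}[ω^{f(x)}]|` with `ω = e^{2πi/q}`. -/
noncomputable def bias {q n : ℕ} [NeZero q] (f : (Fin n → ZMod q) → ZMod q) : ℝ :=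
  ‖∑ x : Fin n → ZMod q,
    Complex.exp (2 * Real.pi * Complex.I * ((f x).val : ℂ) / (q : ℂ))‖ / (q : ℝ) ^ n

/-!
Expanding `|∑ₓ ω^{f(x)}|² = ∑_y ∑ₓ ω^{f(x+y) - f(x)}` shows that the biases of the derivatives
`D_y f` average at least `δ²`. As every bias is at most `1`, a Markov-type count then shows that
`bias (D_y f) ≥ δ² / 2` for at least a `δ² / 2` fraction of the directions `y`.
-/

section AddChar

variable {G R K : Type*} [AddCommGroup R] [Finite R] [RCLike K]

lemma norm_sum_addChar_le_card [Fintype G] (ψ : AddChar R K) (f : G → R) :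
    ‖∑ x, ψ (f x)‖ ≤ Fintype.card G := by
  simpa using norm_sum_le univ fun x => ψ (f x)

lemma sq_norm_sum_addChar_eq_sum_sum_sub [AddCommGroup G] [Fintype G] (ψ : AddChar R K)
    (f : G → R) : (‖∑ x, ψ (f x)‖ ^ 2 : K) = ∑ y, ∑ x, ψ (f (x + y) - f x) :=
  calc (‖∑ x, ψ (f x)‖ ^ 2 : K)
      = ∑ x', ∑ x, ψ (f x) * (starRingEnd K) (ψ (f x')) := by
        rw [← RCLike.mul_conj, map_sum, sum_mul_sum, sum_comm]
    _ = ∑ x', ∑ y, ψ (f (x' + y) - f x') := by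
        refine sum_congr rfl fun x' _ => ?_
        rw [← Equiv.sum_comp (Equiv.addLeft x')]
        simp [AddChar.map_sub_eq_div, div_eq_mul_inv, AddChar.inv_apply_eq_conj]
    _ = ∑ y, ∑ x, ψ (f (x + y) - f x) := sum_comm

lemma sq_norm_sum_addChar_le_sum_norm [AddCommGroup G] [Fintype G] (ψ : AddChar R K)
    (f : G → R) : ‖∑ x, ψ (f x)‖ ^ 2 ≤ ∑ y, ‖∑ x, ψ (f (x + y) - f x)‖ := by
  have h := congrArg RCLike.re (sq_norm_sum_addChar_eq_sum_sum_sub ψ f)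
  rw [← RCLike.ofReal_pow, RCLike.ofReal_re, map_sum] at h
  exact h.trans_le <| sum_le_sum fun y _ => RCLike.re_le_norm _

end AddChar

lemma Finset.mul_card_le_card_filter_of_mul_card_le_sum {ι : Type*} (s : Finset ι) (b : ι → ℝ)
    {ε : ℝ} (hε : 0 ≤ ε) (hb : ∀ i ∈ s, b i ≤ 1) (hsum : ε * #s ≤ ∑ i ∈ s, b i) :
    ε / 2 * #s ≤ #{i ∈ s | ε / 2 ≤ b i} := by
  have hsplit : ∑ i ∈ s, b i ≤ #{i ∈ s | ε / 2 ≤ b i} + #s * (ε / 2) :=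
    calc ∑ i ∈ s, b i
        = ∑ i ∈ s with ε / 2 ≤ b i, b i + ∑ i ∈ s with ¬ ε / 2 ≤ b i, b i :=
          (sum_filter_add_sum_filter_not s (fun i => ε / 2 ≤ b i) b).symm
      _ ≤ ∑ i ∈ s with ε / 2 ≤ b i, 1 + ∑ i ∈ s with ¬ ε / 2 ≤ b i, ε / 2 := by
          gcongr with i hi i hi
          · exact hb i (mem_filter.1 hi).1
          · exact (not_le.1 (mem_filter.1 hi).2).le
      _ ≤ #{i ∈ s | ε / 2 ≤ b i} + #s * (ε / 2) := by
          simp only [sum_const, nsmul_eq_mul, mul_one]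
          gcongr
          exact filter_subset (fun i => ¬ε / 2 ≤ b i) s
  linarith

section Bias

variable {q n : ℕ} [NeZero q]

lemma bias_eq_norm_sum_stdAddChar (f : (Fin n → ZMod q) → ZMod q) :
    bias f = ‖∑ x, ZMod.stdAddChar (f x)‖ / (q : ℝ) ^ n := by
  simp only [bias, ZMod.stdAddChar_apply, ZMod.toCircle_apply]

lemma bias_le_one (f : (Fin n → ZMod q) → ZMod q) : bias f ≤ 1 := by
  rw [bias_eq_norm_sum_stdAddChar, div_le_one (pow_pos (mod_cast NeZero.pos q) n)]
  simpa using norm_sum_addChar_le_card ZMod.stdAddChar f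

lemma sq_bias_mul_card_le_sum_bias_sub (f : (Fin n → ZMod q) → ZMod q) :
    bias f ^ 2 * (q : ℝ) ^ n ≤ ∑ y, bias (fun x => f (x + y) - f x) := by
  have hN : (0 : ℝ) < (q : ℝ) ^ n := pow_pos (mod_cast NeZero.pos q) n
  simp only [bias_eq_norm_sum_stdAddChar, ← sum_div, div_pow]
  rw [le_div_iff₀ hN, div_mul_eq_mul_div, div_mul_eq_mul_div, mul_assoc, ← sq,
    mul_div_cancel_right₀ _ (pow_ne_zero 2 hN.ne')]
  exact sq_norm_sum_addChar_le_sum_norm ZMod.stdAddChar f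

end Bias

theorem stmt0 {q n : ℕ} [Fact (Nat.Prime q)] (f : (Fin n → ZMod q) → ZMod q) (δ : ℝ)
    (hδ : bias f = δ) :
    ∃ A : Finset (Fin n → ZMod q),
      (δ ^ 2 / 2) * (q : ℝ) ^ n ≤ (A.card : ℝ) ∧
      ∀ y ∈ A, δ ^ 2 / 2 ≤ bias (fun x => f (x + y) - f x) := by
  classical
  subst hδ
  have hcard : (#(univ : Finset (Fin n → ZMod q)) : ℝ) = (q : ℝ) ^ n := by simp
  refine ⟨univ.filter fun y => bias f ^ 2 / 2 ≤ bias (fun x => f (x + y) - f x), ?_,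
    fun y hy => (mem_filter.1 hy).2⟩
  rw [← hcard]
  refine univ.mul_card_le_card_filter_of_mul_card_le_sum _ (sq_nonneg _)
    (fun y _ => bias_le_one _) ?_
  rw [hcard]
  exact sq_bias_mul_card_le_sum_bias_sub f
end

section
/- If f: F^n → F is a degree-d polynomial and V ⊆ F^n is an affine subspace of dimension n - t, then strong-rank(f) ≤ strong-rank(f|_V) + t. -/
/-!
Write `V = c + M 𝔽ᵐ` and pick matrices with `M N + S Z = 1`, `S` having `t = n - m` columns
(`S` spans a complement of the range of `M`). With `y = X - c`, the affine forms `ℓ = N y` and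
`z = Z y` satisfy `X - (c + M ℓ) = S z`, so for the projection `π = c + M ℓ` onto `V` the
telescoping identity `f - f ∘ π = ∑ᵢ (Xᵢ - πᵢ) Dᵢ`, `deg Dᵢ ≤ d - 1`, becomes
`f = (f|_V) ∘ ℓ + ∑ₗ zₗ Rₗ` with `deg Rₗ ≤ d - 1`. Pulling a strong decomposition of `f|_V` back
along the affine map `ℓ` does not raise degrees, and the `t` products `zₗ Rₗ` add at most `t`
further terms.
-/

open Finset MvPolynomial

/-- `P` has a strong decomposition with `r` terms with respect to degree `d`. -/
def HasStrongDecomp {q n : ℕ} (d r : ℕ) (P : MvPolynomial (Fin n) (ZMod q)) : Prop :=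
  ∃ (G H : Fin r → MvPolynomial (Fin n) (ZMod q)) (Q : MvPolynomial (Fin n) (ZMod q)),
    (∀ i, 0 < (G i).totalDegree) ∧ (∀ i, 0 < (H i).totalDegree) ∧
    (∀ i, (G i).totalDegree + (H i).totalDegree ≤ d) ∧
    Q.totalDegree ≤ d - 1 ∧
    P = ∑ i, G i * H i + Q

/-- The strong rank of a polynomial with respect to degree `d`. -/
noncomputable def strongRankD {q n : ℕ} (d : ℕ) (P : MvPolynomial (Fin n) (ZMod q)) : ℕ :=
  sInf {r | HasStrongDecomp d r P}

open Matrix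

namespace MvPolynomial

section Substitution

variable {R σ τ : Type*} [CommSemiring R]

theorem totalDegree_X_le (i : σ) : (X i : MvPolynomial σ R).totalDegree ≤ 1 :=
  (totalDegree_monomial_le _ _).trans_eq (Finsupp.sum_single_index rfl)

theorem totalDegree_pow_le_of_totalDegree_le_one {p : MvPolynomial σ R}
    (hp : p.totalDegree ≤ 1) (b : ℕ) : (p ^ b).totalDegree ≤ b :=
  (totalDegree_pow _ _).trans <| (Nat.mul_le_mul_left _ hp).trans_eq (mul_one _)

theorem totalDegree_finsuppProd_pow_le {u : σ → MvPolynomial τ R}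
    (hu : ∀ i, (u i).totalDegree ≤ 1) (a : σ →₀ ℕ) :
    (a.prod fun i e => u i ^ e).totalDegree ≤ a.degree :=
  (totalDegree_finsetProd _ _).trans <| Finset.sum_le_sum fun i _ =>
    totalDegree_pow_le_of_totalDegree_le_one (hu i) _

theorem totalDegree_bind₁_le {φ : σ → MvPolynomial τ R} (hφ : ∀ i, (φ i).totalDegree ≤ 1)
    (p : MvPolynomial σ R) : (bind₁ φ p).totalDegree ≤ p.totalDegree := by
  conv_lhs => rw [p.as_sum, map_sum]
  refine totalDegree_finsetSum_le fun a ha => ?_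
  rw [bind₁_monomial]
  refine (totalDegree_mul _ _).trans ?_
  rw [totalDegree_C, zero_add]
  exact (totalDegree_finsuppProd_pow_le hφ a).trans (le_totalDegree ha)

theorem totalDegree_mulVec_map_C_le {ι κ : Type*} [Fintype κ] (A : Matrix ι κ R)
    {x : κ → MvPolynomial σ R} {k : ℕ} (hx : ∀ j, (x j).totalDegree ≤ k) (i : ι) :
    ((A.map C *ᵥ x) i).totalDegree ≤ k :=
  totalDegree_finsetSum_le fun j _ =>
    (totalDegree_mul _ _).trans <| by simpa using hx j

theorem bind₁_mulVec_map_C {ι κ : Type*} [Fintype κ] (ψ : σ → MvPolynomial τ R)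
    (A : Matrix ι κ R) (x : κ → MvPolynomial σ R) (i : ι) :
    bind₁ ψ ((A.map C *ᵥ x) i) = (A.map C *ᵥ fun j => bind₁ ψ (x j)) i := by
  simp [Matrix.mulVec, dotProduct, map_sum]

end Substitution

section Cofactors

variable {R σ τ : Type*} [CommRing R] [Fintype σ]

def cofactorSubmodule (w : σ → MvPolynomial τ R) (k : ℕ) : Submodule R (MvPolynomial τ R) where
  carrier := {p | ∃ W : σ → MvPolynomial τ R, (∀ i, (W i).totalDegree ≤ k) ∧ p = ∑ i, w i * W i}
  zero_mem' := ⟨0, by simp⟩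
  add_mem' := by
    rintro _ _ ⟨W, hW, rfl⟩ ⟨W', hW', rfl⟩
    exact ⟨W + W', fun i => (totalDegree_add _ _).trans (max_le (hW i) (hW' i)),
      by simp [mul_add, Finset.sum_add_distrib]⟩
  smul_mem' := by
    rintro c _ ⟨W, hW, rfl⟩
    exact ⟨c • W, fun i => (totalDegree_smul_le _ _).trans (hW i), by simp [Finset.smul_sum]⟩

variable {w : σ → MvPolynomial τ R} {k : ℕ}

theorem cofactorSubmodule_mono {k' : ℕ} (h : k ≤ k') :
    cofactorSubmodule w k ≤ cofactorSubmodule w k' := by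
  rintro _ ⟨W, hW, rfl⟩
  exact ⟨W, fun i => (hW i).trans h, rfl⟩

theorem mul_mem_cofactorSubmodule (h : MvPolynomial τ R) {p : MvPolynomial τ R}
    (hp : p ∈ cofactorSubmodule w k) : h * p ∈ cofactorSubmodule w (h.totalDegree + k) := by
  obtain ⟨W, hW, rfl⟩ := hp
  exact ⟨fun i => h * W i, fun i => (totalDegree_mul _ _).trans (by gcongr; exact hW i),
    by simp only [Finset.mul_sum, mul_left_comm]⟩

theorem mul_mem_cofactorSubmodule_of_totalDegree_le (i : σ) {W : MvPolynomial τ R}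
    (hW : W.totalDegree ≤ k) : w i * W ∈ cofactorSubmodule w k := by
  classical
  refine ⟨Pi.single i W, fun j => ?_, by simp [Pi.single_apply]⟩
  rcases eq_or_ne j i with rfl | hj
  · simpa using hW
  · simp [hj]

variable {u v : σ → MvPolynomial τ R}

theorem pow_sub_pow_mem_cofactorSubmodule (hu : ∀ i, (u i).totalDegree ≤ 1)
    (hv : ∀ i, (v i).totalDegree ≤ 1) (i : σ) (b : ℕ) :
    u i ^ b - v i ^ b ∈ cofactorSubmodule (u - v) (b - 1) := by
  rw [← geom_sum₂_mul, mul_comm]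
  refine mul_mem_cofactorSubmodule_of_totalDegree_le i (totalDegree_finsetSum_le fun s hs => ?_)
  have hs : s < b := Finset.mem_range.mp hs
  calc (u i ^ s * v i ^ (b - 1 - s)).totalDegree
      ≤ s + (b - 1 - s) :=
        (totalDegree_mul _ _).trans (add_le_add (totalDegree_pow_le_of_totalDegree_le_one (hu i) _)
          (totalDegree_pow_le_of_totalDegree_le_one (hv i) _))
    _ = b - 1 := by omega

theorem finsuppProd_pow_sub_mem_cofactorSubmodule (hu : ∀ i, (u i).totalDegree ≤ 1)
    (hv : ∀ i, (v i).totalDegree ≤ 1) (a : σ →₀ ℕ) :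
    (a.prod fun i e => u i ^ e) - (a.prod fun i e => v i ^ e) ∈
      cofactorSubmodule (u - v) (a.degree - 1) := by
  induction a using Finsupp.induction with
  | zero => simp
  | single_add i b a ha hb ih =>
    have hprod (x : σ → MvPolynomial τ R) :
        ((Finsupp.single i b + a).prod fun j e => x j ^ e) =
          x i ^ b * a.prod fun j e => x j ^ e := by
      rw [Finsupp.prod_add_index' (by simp) fun _ _ _ => pow_add _ _ _,
        Finsupp.prod_single_index (by simp)]
    rw [hprod, hprod, show ∀ x y x' y' : MvPolynomial τ R,
      x * y - x' * y' = y * (x - x') + x' * (y - y') by intros; ring]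
    have hdeg : (Finsupp.single i b + a).degree = b + a.degree := by simp
    rw [hdeg]
    refine add_mem (cofactorSubmodule_mono ?_ (mul_mem_cofactorSubmodule _
      (pow_sub_pow_mem_cofactorSubmodule hu hv i b))) ?_
    · exact (Nat.add_le_add_right (totalDegree_finsuppProd_pow_le hu a) _).trans (by omega)
    rcases eq_or_ne a 0 with rfl | ha0
    · simp
    have ha0 : a.degree ≠ 0 := (Finsupp.degree_eq_zero_iff a).not.mpr ha0
    exact cofactorSubmodule_mono ((Nat.add_le_add_right
      (totalDegree_pow_le_of_totalDegree_le_one (hv i) b) _).trans (by omega))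
      (mul_mem_cofactorSubmodule _ ih)

theorem sub_bind₁_mem_cofactorSubmodule {π : σ → MvPolynomial σ R}
    (hπ : ∀ i, (π i).totalDegree ≤ 1) (p : MvPolynomial σ R) :
    p - bind₁ π p ∈ cofactorSubmodule (X - π) (p.totalDegree - 1) := by
  have hp : p - bind₁ π p =
      ∑ a ∈ p.support, (monomial a (coeff a p) - bind₁ π (monomial a (coeff a p))) := by
    conv_lhs => rw [p.as_sum]
    rw [map_sum, Finset.sum_sub_distrib]
  rw [hp]
  refine Submodule.sum_mem _ fun a ha => ?_
  rw [bind₁_monomial, monomial_eq, ← Finsupp.prod, ← mul_sub, ← smul_eq_C_mul]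
  exact Submodule.smul_mem _ _ <|
    cofactorSubmodule_mono (Nat.sub_le_sub_right (le_totalDegree ha) 1)
      (finsuppProd_pow_sub_mem_cofactorSubmodule totalDegree_X_le hπ a)

theorem cofactorSubmodule_mulVec_map_C_le {ι : Type*} [Fintype ι] (A : Matrix ι σ R)
    (w : σ → MvPolynomial τ R) (k : ℕ) :
    cofactorSubmodule (A.map C *ᵥ w) k ≤ cofactorSubmodule w k := by
  rintro _ ⟨W, hW, rfl⟩
  refine ⟨Aᵀ.map C *ᵥ W, totalDegree_mulVec_map_C_le _ hW, ?_⟩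
  change (A.map C *ᵥ w) ⬝ᵥ W = w ⬝ᵥ (Aᵀ.map C *ᵥ W)
  rw [Matrix.transpose_map, Matrix.mulVec_transpose, dotProduct_comm, Matrix.dotProduct_mulVec,
    dotProduct_comm]

theorem sub_bind₁_bind₁_mem_cofactorSubmodule {n m t : ℕ} {M : Matrix (Fin n) (Fin m) R}
    {N : Matrix (Fin m) (Fin n) R} {S : Matrix (Fin n) (Fin t) R} {Z : Matrix (Fin t) (Fin n) R}
    (h : M * N + S * Z = 1) (c : Fin n → R) (f : MvPolynomial (Fin n) R) :
    f - bind₁ (N.map C *ᵥ fun i => X i - C (c i))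
        (bind₁ (fun i => C (c i) + ∑ j, C (M i j) * X j) f) ∈
      cofactorSubmodule (Z.map C *ᵥ fun i => X i - C (c i)) (f.totalDegree - 1) := by
  set y : Fin n → MvPolynomial (Fin n) R := fun i => X i - C (c i)
  have hy i : (y i).totalDegree ≤ 1 := (totalDegree_sub_C_le _ _).trans (totalDegree_X_le i)
  -- the composite substitution is `X ↦ X - S Z y`, i.e. `X - M N y = S Z y` since `M N + S Z = 1`
  have hπ : (fun i => bind₁ (N.map C *ᵥ y) (C (c i) + ∑ j, C (M i j) * X j)) =
      X - S.map C *ᵥ (Z.map C *ᵥ y) := by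
    have hC := congrArg (RingHom.mapMatrix (C : R →+* MvPolynomial (Fin n) R)) h
    simp only [map_add, map_one, RingHom.mapMatrix_apply, Matrix.map_mul] at hC
    funext i
    change bind₁ _ (C (c i) + (M.map C *ᵥ X) i) = _
    rw [map_add, bind₁_C_right, bind₁_mulVec_map_C]
    simp only [bind₁_X_right, Matrix.mulVec_mulVec, eq_sub_of_add_eq hC, Matrix.sub_mulVec,
      Matrix.one_mulVec, Pi.sub_apply, y]
    ring
  rw [bind₁_bind₁, hπ]
  have hπ1 i :
      (((X : Fin n → MvPolynomial (Fin n) R) - S.map C *ᵥ (Z.map C *ᵥ y)) i).totalDegree ≤ 1 :=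
    (totalDegree_sub _ _).trans (max_le (totalDegree_X_le i)
      (totalDegree_mulVec_map_C_le _ (totalDegree_mulVec_map_C_le _ hy) i))
  have := sub_bind₁_mem_cofactorSubmodule hπ1 f
  rw [sub_sub_cancel] at this
  exact cofactorSubmodule_mulVec_map_C_le _ _ _ this

end Cofactors

end MvPolynomial

theorem Nat.sInf_le_sInf_add_of_forall_exists {A B : Set ℕ} (t : ℕ)
    (hBA : ∀ b ∈ B, ∃ a ≤ b + t, a ∈ A) (hAB : ∀ a ∈ A, ∃ b, b ∈ B) :
    sInf A ≤ sInf B + t := by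
  rcases B.eq_empty_or_nonempty with rfl | hB
  · simp [Set.eq_empty_of_forall_notMem fun a ha => by simpa using hAB a ha]
  obtain ⟨a, ha, haA⟩ := hBA _ (Nat.sInf_mem hB)
  exact (Nat.sInf_le haA).trans ha

theorem Matrix.exists_mul_add_mul_eq_one {K : Type*} [Field K] {n m : ℕ}
    (M : Matrix (Fin n) (Fin m) K) (hM : Function.Injective M.mulVec) :
    ∃ (N : Matrix (Fin m) (Fin n) K) (S : Matrix (Fin n) (Fin (n - m)) K)
      (Z : Matrix (Fin (n - m)) (Fin n) K), M * N + S * Z = 1 := by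
  -- split `Kⁿ` as the range of `M` plus a complement `W`, and let `S` be a basis of `W`
  have hT : Function.Injective M.mulVecLin := hM
  obtain ⟨W, hW⟩ := (LinearMap.range M.mulVecLin).exists_isCompl
  have hdim : Module.finrank K W = n - m := by
    have := Submodule.finrank_add_eq_of_isCompl hW
    rw [LinearMap.finrank_range_of_inj hT, Module.finrank_fin_fun, Module.finrank_fin_fun] at this
    omega
  let b := Module.finBasisOfFinrankEq K W hdim
  let E : ((Fin m → K) × (Fin (n - m) → K)) ≃ₗ[K] (Fin n → K) :=
    ((LinearEquiv.ofInjective _ hT).prodCongr b.equivFun.symm).trans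
      (Submodule.prodEquivOfIsCompl _ _ hW)
  let S : (Fin (n - m) → K) →ₗ[K] Fin n → K := W.subtype ∘ₗ b.equivFun.symm.toLinearMap
  refine ⟨LinearMap.toMatrix' (LinearMap.fst K _ _ ∘ₗ E.symm.toLinearMap), LinearMap.toMatrix' S,
    LinearMap.toMatrix' (LinearMap.snd K _ _ ∘ₗ E.symm.toLinearMap), ?_⟩
  refine Matrix.mulVec_injective (funext fun x => ?_)
  have hx : E (E.symm x) = x := E.apply_symm_apply x
  have hT' (y : LinearMap.range M.mulVecLin) : M *ᵥ (LinearEquiv.ofInjective _ hT).symm y = y :=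
    LinearEquiv.ofInjective_symm_apply (f := M.mulVecLin) y
  simpa [Matrix.add_mulVec, ← Matrix.mulVec_mulVec, LinearMap.toMatrix'_mulVec, E, S, hT'] using hx

section StrongRank

variable {q n : ℕ}

theorem exists_hasStrongDecomp_le_card {ι : Type*} [Fintype ι] {d : ℕ}
    {P Q : MvPolynomial (Fin n) (ZMod q)} (u v : ι → MvPolynomial (Fin n) (ZMod q))
    (huv : ∀ l, (u l).totalDegree + (v l).totalDegree ≤ d)
    (hu : ∀ l, (u l).totalDegree < d) (hv : ∀ l, (v l).totalDegree < d)
    (hQ : Q.totalDegree ≤ d - 1) (hP : P = ∑ l, u l * v l + Q) :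
    ∃ s ≤ Fintype.card ι, HasStrongDecomp d s P := by
  classical
  -- terms with a constant factor have degree `< d` and are moved into the remainder
  let T := Finset.univ.filter fun l => 0 < (u l).totalDegree ∧ 0 < (v l).totalDegree
  let e : Fin T.card ≃ T := T.equivFin.symm
  have hlow : ∀ l ∉ T, (u l * v l).totalDegree ≤ d - 1 := fun l hl => by
    simp only [T, Finset.mem_filter, Finset.mem_univ, true_and, not_and_or, not_lt,
      Nat.le_zero] at hl
    have := totalDegree_mul (u l) (v l)
    have := hu l; have := hv l
    omega
  refine ⟨T.card, Finset.card_le_univ T, fun i => u (e i), fun i => v (e i),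
    Q + ∑ l ∈ Tᶜ, u l * v l, fun i => (Finset.mem_filter.mp (e i).2).2.1,
    fun i => (Finset.mem_filter.mp (e i).2).2.2, fun i => huv _,
    (totalDegree_add _ _).trans (max_le hQ (totalDegree_finsetSum_le fun l hl =>
      hlow l (Finset.mem_compl.mp hl))), ?_⟩
  rw [hP, ← Finset.sum_add_sum_compl T, ← Finset.sum_coe_sort T, ← e.sum_comp]
  ring

theorem HasStrongDecomp.exists_bind₁_le {m d r : ℕ} {f : MvPolynomial (Fin n) (ZMod q)}
    {φ : Fin n → MvPolynomial (Fin m) (ZMod q)} (hφ : ∀ i, (φ i).totalDegree ≤ 1)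
    (hf : HasStrongDecomp d r f) : ∃ s ≤ r, HasStrongDecomp d s (bind₁ φ f) := by
  obtain ⟨G, H, Q, hG, hH, hGH, hQ, rfl⟩ := hf
  have hGφ i := totalDegree_bind₁_le hφ (G i)
  have hHφ i := totalDegree_bind₁_le hφ (H i)
  simpa using exists_hasStrongDecomp_le_card (fun i => bind₁ φ (G i)) (fun i => bind₁ φ (H i))
    (fun i => (add_le_add (hGφ i) (hHφ i)).trans (hGH i))
    (fun i => by have := hG i; have := hH i; have := hGH i; have := hGφ i; omega)
    (fun i => by have := hG i; have := hH i; have := hGH i; have := hHφ i; omega)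
    ((totalDegree_bind₁_le hφ Q).trans hQ) (by simp)

theorem strongRankD_eq_zero_of_le_one {d : ℕ} (hd : d ≤ 1) (P : MvPolynomial (Fin n) (ZMod q)) :
    strongRankD d P = 0 := by
  rw [strongRankD, Nat.sInf_eq_zero, or_iff_not_imp_right, ← ne_eq, ← Set.nonempty_iff_ne_empty]
  rintro ⟨r, G, H, Q, hG, hH, hGH, hQ, hP⟩
  obtain rfl : r = 0 := by
    by_contra hr
    have := hG ⟨0, by omega⟩; have := hH ⟨0, by omega⟩; have := hGH ⟨0, by omega⟩
    omega
  exact ⟨G, H, Q, hG, hH, hGH, hQ, hP⟩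

theorem HasStrongDecomp.exists_le_add_of_bind₁ {m t d r : ℕ} (hd : 2 ≤ d)
    {M : Matrix (Fin n) (Fin m) (ZMod q)} {N : Matrix (Fin m) (Fin n) (ZMod q)}
    {S : Matrix (Fin n) (Fin t) (ZMod q)} {Z : Matrix (Fin t) (Fin n) (ZMod q)}
    (h : M * N + S * Z = 1) (c : Fin n → ZMod q) {f : MvPolynomial (Fin n) (ZMod q)}
    (hf : f.totalDegree ≤ d)
    (hg : HasStrongDecomp d r (bind₁ (fun i => C (c i) + ∑ j, C (M i j) * X j) f)) :
    ∃ s ≤ r + t, HasStrongDecomp d s f := by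
  obtain ⟨G, H, Q, hG, hH, hGH, hQ, hg⟩ := hg
  set y : Fin n → MvPolynomial (Fin n) (ZMod q) := fun i => X i - C (c i)
  have hy i : (y i).totalDegree ≤ 1 := (totalDegree_sub_C_le _ _).trans (totalDegree_X_le i)
  set ℓ := N.map C *ᵥ y
  have hℓ : ∀ p, (bind₁ ℓ p).totalDegree ≤ p.totalDegree :=
    totalDegree_bind₁_le (totalDegree_mulVec_map_C_le N hy)
  have hz := totalDegree_mulVec_map_C_le Z hy
  obtain ⟨R, hR, hfR⟩ := sub_bind₁_bind₁_mem_cofactorSubmodule h c f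
  rw [hg, sub_eq_iff_eq_add'] at hfR
  set u := Sum.elim (fun i => bind₁ ℓ (G i)) (Z.map C *ᵥ y)
  set v := Sum.elim (fun i => bind₁ ℓ (H i)) R
  have hf : f = ∑ l, u l * v l + bind₁ ℓ Q := by
    rw [hfR, Fintype.sum_sum_type]
    simp only [map_add, map_sum, map_mul, u, v, Sum.elim_inl, Sum.elim_inr]
    ring
  have := exists_hasStrongDecomp_le_card u v ?_ ?_ ?_ ((hℓ Q).trans hQ) hf
  · simpa only [Fintype.card_sum, Fintype.card_fin] using this
  all_goals rintro (i | l) <;> simp only [u, v, Sum.elim_inl, Sum.elim_inr]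
  · exact (add_le_add (hℓ _) (hℓ _)).trans (hGH i)
  · have := hz l; have := hR l; omega
  · have := hℓ (G i); have := hH i; have := hGH i; omega
  · have := hz l; omega
  · have := hℓ (H i); have := hG i; have := hGH i; omega
  · have := hR l; omega

end StrongRank

theorem stmt5_general {q n m : ℕ} [Fact (Nat.Prime q)] (d : ℕ)
    (f : MvPolynomial (Fin n) (ZMod q)) (hdeg : f.totalDegree ≤ d)
    (M : Matrix (Fin n) (Fin m) (ZMod q)) (c : Fin n → ZMod q)
    (hinj : Function.Injective fun (u : Fin m → ZMod q) =>
      fun i : Fin n => c i + ∑ j, M i j * u j) :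
    strongRankD d f ≤
      strongRankD d (MvPolynomial.bind₁
        (fun i => MvPolynomial.C (c i) + ∑ j, MvPolynomial.C (M i j) * MvPolynomial.X j) f)
      + (n - m) := by
  rcases le_or_gt d 1 with hd | hd
  · simp [strongRankD_eq_zero_of_le_one hd f]
  have hM : Function.Injective M.mulVec := fun u v huv =>
    hinj (funext fun i => congrArg (c i + ·) (congrFun huv i))
  obtain ⟨N, S, Z, hMNSZ⟩ := M.exists_mul_add_mul_eq_one hM
  have hφ i : (C (c i) + ∑ j, C (M i j) * X j : MvPolynomial (Fin m) (ZMod q)).totalDegree ≤ 1 :=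
    (totalDegree_add _ _).trans
      (max_le (by simp) (totalDegree_mulVec_map_C_le M totalDegree_X_le i))
  -- as `sInf ∅ = 0`, we also need that `f|_V` has some strong decomposition whenever `f` does
  exact Nat.sInf_le_sInf_add_of_forall_exists _
    (fun r hr => HasStrongDecomp.exists_le_add_of_bind₁ hd hMNSZ c hdeg hr)
    (fun r hr => (hr.exists_bind₁_le hφ).imp fun _ => And.right)

/-- If `V` is an affine subspace of dimension `m = n - t`, parametrized by an injective
affine map `u ↦ c + M u`, then `strong-rank(f) ≤ strong-rank(f|_V) + t`. -/
theorem stmt5 {q n m : ℕ} [Fact (Nat.Prime q)] (hm : m ≤ n) (d : ℕ)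
    (f : MvPolynomial (Fin n) (ZMod q)) (hdeg : f.totalDegree ≤ d)
    (M : Matrix (Fin n) (Fin m) (ZMod q)) (c : Fin n → ZMod q)
    (hinj : Function.Injective fun (u : Fin m → ZMod q) =>
      fun i : Fin n => c i + ∑ j, M i j * u j) :
    strongRankD d f ≤
      strongRankD d (MvPolynomial.bind₁
        (fun i => MvPolynomial.C (c i) + ∑ j, MvPolynomial.C (M i j) * MvPolynomial.X j) f)
      + (n - m) :=
  stmt5_general d f hdeg M c hinj
end
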